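/- Under the same hypotheses (M Hermitian positive definite, H_T, H_P invertible with ‖H_T⁻¹M‖_M ≤ C_T, ‖H_P⁻¹M‖_M ≤ C_P, M_1 = i((γ-1)/γ)M, M_2 = γ(1-Λ/𝓜)M), every generalized eigenvalue λ of A = [[H_T,M_1],[M_2,H_P]] with respect to the block lower-triangular preconditioner Π_GS = [[H_T,0],[M_2,H_P]] satisfies |λ - 1| ≤ C_T C_P (γ-1)(1 - Λ/𝓜), and λ = 1 occurs with eigenspace of dimension at least n. -/

import Mathlib

open Matrix
open scoped ComplexOrder

/-- The vector norm induced by a Hermitian positive definite matrix `M`: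
`‖u‖_M = (u* M u)^{1/2}`. -/
noncomputable def vecNormM {n : ℕ} (M : Matrix (Fin n) (Fin n) ℂ) (u : Fin n → ℂ) : ℝ :=
  Real.sqrt (star u ⬝ᵥ M.mulVec u).re

/-- The matrix operator norm induced by the vector norm `‖·‖_M`. -/
noncomputable def opNormM {n : ℕ} (M A : Matrix (Fin n) (Fin n) ℂ) : ℝ :=
  sSup {r : ℝ | ∃ u : Fin n → ℂ, vecNormM M u = 1 ∧ r = vecNormM M (A.mulVec u)}

/-!
The difference `A - Π_GS` has the single nonzero block `M₁` in the upper right corner. Hence for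
`λ ≠ 1` the second block row of `A x = λ Π_GS x` forces `x₂ = -H_P⁻¹ M₂ x₁`, and the first one
becomes `(λ - 1) x₁ = -H_T⁻¹ M₁ H_P⁻¹ M₂ x₁` with `x₁ ≠ 0`; taking `‖·‖_M` norms bounds `|λ - 1|`
by `|m₁| |m₂| C_T C_P`. Every vector with `x₂ = 0` is annihilated by `A - Π_GS`, which gives the
`n`-dimensional eigenspace of `λ = 1`.
-/

theorem LinearMap.exists_bound_of_finiteDimensional {𝕜 E F : Type*} [NontriviallyNormedField 𝕜]
    [CompleteSpace 𝕜] [NormedAddCommGroup E] [NormedSpace 𝕜 E] [FiniteDimensional 𝕜 E]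
    [NormedAddCommGroup F] [NormedSpace 𝕜 F] (f : E →ₗ[𝕜] F) :
    ∃ K, ∀ u, ‖f u‖ ≤ K * ‖u‖ :=
  ⟨_, (LinearMap.toContinuousLinearMap f).le_opNorm⟩

namespace Matrix

theorem eq_inv_mulVec_of_mulVec_eq {K m : Type*} [Field K] [Fintype m] [DecidableEq m]
    {A : Matrix m m K} (hA : IsUnit A) {u v : m → K} (h : A *ᵥ v = u) : v = A⁻¹ *ᵥ u := by
  rw [← h, mulVec_mulVec, nonsing_inv_mul A ((isUnit_iff_isUnit_det A).mp hA), one_mulVec]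

section GaussSeidel

variable {K m p : Type*} [Field K] [Fintype m] [Fintype p]
  {HT : Matrix m m K} {M₁ : Matrix m p K} {M₂ : Matrix p m K} {HP : Matrix p p K}

theorem fromBlocks_mulVec_eq_of_comp_inr_eq_zero {x : m ⊕ p → K} (hx : x ∘ Sum.inr = 0) :
    fromBlocks HT M₁ M₂ HP *ᵥ x = fromBlocks HT 0 M₂ HP *ᵥ x := by
  simp [fromBlocks_mulVec, hx]

theorem comp_inl_ne_zero_and_smul_eq_of_mulVec_eq_smul [DecidableEq m] [DecidableEq p]
    (hHT : IsUnit HT) (hHP : IsUnit HP) {lam : K} (hlam : lam ≠ 1) {x : m ⊕ p → K} (hx : x ≠ 0)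
    (h : fromBlocks HT M₁ M₂ HP *ᵥ x = lam • fromBlocks HT 0 M₂ HP *ᵥ x) :
    x ∘ Sum.inl ≠ 0 ∧
      (lam - 1) • (x ∘ Sum.inl) = -((HT⁻¹ * M₁) *ᵥ ((HP⁻¹ * M₂) *ᵥ (x ∘ Sum.inl))) := by
  set x₁ := x ∘ Sum.inl
  set x₂ := x ∘ Sum.inr
  rw [fromBlocks_mulVec, fromBlocks_mulVec, zero_mulVec, add_zero] at h
  have e₁ : HT *ᵥ x₁ + M₁ *ᵥ x₂ = lam • HT *ᵥ x₁ := funext fun j => congrFun h (Sum.inl j)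
  have e₂ : M₂ *ᵥ x₁ + HP *ᵥ x₂ = lam • (M₂ *ᵥ x₁ + HP *ᵥ x₂) :=
    funext fun j => congrFun h (Sum.inr j)
  have hx₂ : x₂ = -((HP⁻¹ * M₂) *ᵥ x₁) := by
    have hsum : M₂ *ᵥ x₁ + HP *ᵥ x₂ = 0 := by
      have : (lam - 1) • (M₂ *ᵥ x₁ + HP *ᵥ x₂) = 0 := by rw [sub_smul, one_smul, ← e₂, sub_self]
      exact (smul_eq_zero.mp this).resolve_left (sub_ne_zero.mpr hlam)
    rw [eq_inv_mulVec_of_mulVec_eq hHP (eq_neg_of_add_eq_zero_right hsum), mulVec_neg,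
      mulVec_mulVec]
  have hx₁ : (lam - 1) • x₁ = (HT⁻¹ * M₁) *ᵥ x₂ := by
    rw [← mulVec_mulVec]
    refine eq_inv_mulVec_of_mulVec_eq hHT ?_
    rw [mulVec_smul, sub_smul, one_smul, ← e₁, add_sub_cancel_left]
  refine ⟨fun h₁ => hx ?_, by rw [hx₁, hx₂, mulVec_neg]⟩
  have h₂ : x₂ = 0 := by rw [hx₂, h₁, mulVec_zero, neg_zero]
  exact funext (Sum.rec (congrFun h₁) (congrFun h₂))

theorem finrank_ker_funLeft_inr :
    Module.finrank K (LinearMap.ker (LinearMap.funLeft K K (Sum.inr : p → m ⊕ p))) =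
      Fintype.card m := by
  have hrank :=
    LinearMap.finrank_range_add_finrank_ker (LinearMap.funLeft K K (Sum.inr : p → m ⊕ p))
  rw [LinearMap.range_eq_top.mpr
      (LinearMap.funLeft_surjective_of_injective K K _ Sum.inr_injective), finrank_top,
    Module.finrank_fintype_fun_eq_card, Module.finrank_fintype_fun_eq_card, Fintype.card_sum]
    at hrank
  omega

end GaussSeidel

end Matrix

section MNorm

variable {n : ℕ} {M : Matrix (Fin n) (Fin n) ℂ}

theorem vecNormM_smul (c : ℂ) (u : Fin n → ℂ) : vecNormM M (c • u) = ‖c‖ * vecNormM M u := by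
  have h : star (c • u) ⬝ᵥ M *ᵥ (c • u) = (Complex.normSq c : ℂ) * (star u ⬝ᵥ M *ᵥ u) := by
    rw [star_smul, mulVec_smul, smul_dotProduct, dotProduct_smul, smul_eq_mul, smul_eq_mul,
      ← mul_assoc, Complex.normSq_eq_conj_mul_self]
    rfl
  rw [vecNormM, vecNormM, h, Complex.re_ofReal_mul, Real.sqrt_mul (Complex.normSq_nonneg c),
    Complex.norm_def]

theorem vecNormM_pos (hM : M.PosDef) {u : Fin n → ℂ} (hu : u ≠ 0) : 0 < vecNormM M u :=
  Real.sqrt_pos.mpr (hM.re_dotProduct_pos hu)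

theorem opNormM_nonneg (B : Matrix (Fin n) (Fin n) ℂ) : 0 ≤ opNormM M B :=
  Real.sSup_nonneg (by rintro _ ⟨u, -, rfl⟩; exact Real.sqrt_nonneg _)

-- `vecNormM M` is the norm of `Matrix.toInnerProductSpace M`, in which every linear map is bounded.
theorem exists_vecNormM_mulVec_le (hM : M.PosDef) (B : Matrix (Fin n) (Fin n) ℂ) :
    ∃ K, ∀ u, vecNormM M (B *ᵥ u) ≤ K * vecNormM M u := by
  have hnorm (u : Fin n → ℂ) : vecNormM M u = @norm _ (M.toNormedAddCommGroup hM).toNorm u := by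
    rw [vecNormM, dotProduct_comm]
    rfl
  simp only [hnorm]
  exact @LinearMap.exists_bound_of_finiteDimensional ℂ _ _ _ _ (M.toNormedAddCommGroup hM)
    (M.toInnerProductSpace hM.posSemidef).toNormedSpace _ (M.toNormedAddCommGroup hM)
    (M.toInnerProductSpace hM.posSemidef).toNormedSpace B.mulVecLin

theorem vecNormM_mulVec_le (hM : M.PosDef) (B : Matrix (Fin n) (Fin n) ℂ) (u : Fin n → ℂ) :
    vecNormM M (B *ᵥ u) ≤ opNormM M B * vecNormM M u := by
  rcases eq_or_ne u 0 with rfl | hu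
  · simp [vecNormM]
  have hpos := vecNormM_pos hM hu
  obtain ⟨K, hK⟩ := exists_vecNormM_mulVec_le hM B
  set c : ℂ := (((vecNormM M u)⁻¹ : ℝ) : ℂ)
  have hc : ‖c‖ = (vecNormM M u)⁻¹ := by simp [c, hpos.le]
  have hunit : vecNormM M (c • u) = 1 := by rw [vecNormM_smul, hc, inv_mul_cancel₀ hpos.ne']
  have hle : vecNormM M (B *ᵥ (c • u)) ≤ opNormM M B :=
    le_csSup ⟨K, by rintro _ ⟨v, hv, rfl⟩; simpa [hv] using hK v⟩ ⟨c • u, hunit, rfl⟩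
  rwa [mulVec_smul, vecNormM_smul, hc, inv_mul_le_iff₀ hpos, mul_comm] at hle

theorem norm_le_of_smul_eq_smul_mulVec_mulVec (hM : M.PosDef) {B C : Matrix (Fin n) (Fin n) ℂ}
    {c a : ℂ} {u : Fin n → ℂ} (hu : u ≠ 0) (h : c • u = a • (B *ᵥ (C *ᵥ u))) :
    ‖c‖ ≤ ‖a‖ * (opNormM M B * opNormM M C) := by
  have hpos := vecNormM_pos hM hu
  refine le_of_mul_le_mul_right ?_ hpos
  calc ‖c‖ * vecNormM M u = ‖a‖ * vecNormM M (B *ᵥ (C *ᵥ u)) := by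
        rw [← vecNormM_smul, h, vecNormM_smul]
    _ ≤ ‖a‖ * (opNormM M B * (opNormM M C * vecNormM M u)) := by
        gcongr
        exact (vecNormM_mulVec_le hM B _).trans
          (mul_le_mul_of_nonneg_left (vecNormM_mulVec_le hM C u) (opNormM_nonneg B))
    _ = ‖a‖ * (opNormM M B * opNormM M C) * vecNormM M u := by ring

theorem norm_sub_one_le_of_mulVec_eq_smul (hM : M.PosDef)
    {HT HP : Matrix (Fin n) (Fin n) ℂ} (hHT : IsUnit HT) (hHP : IsUnit HP) {a₁ a₂ lam : ℂ}
    {x : Fin n ⊕ Fin n → ℂ} (hx : x ≠ 0)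
    (h : fromBlocks HT (a₁ • M) (a₂ • M) HP *ᵥ x = lam • fromBlocks HT 0 (a₂ • M) HP *ᵥ x) :
    ‖lam - 1‖ ≤ ‖a₁‖ * ‖a₂‖ * (opNormM M (HT⁻¹ * M) * opNormM M (HP⁻¹ * M)) := by
  rcases eq_or_ne lam 1 with rfl | hlam
  · rw [sub_self, norm_zero]
    exact mul_nonneg (by positivity) (mul_nonneg (opNormM_nonneg _) (opNormM_nonneg _))
  obtain ⟨hx₁, heq⟩ := comp_inl_ne_zero_and_smul_eq_of_mulVec_eq_smul hHT hHP hlam hx h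
  simp only [Matrix.mul_smul, smul_mulVec, mulVec_smul, smul_smul, ← neg_smul] at heq
  simpa only [norm_neg, norm_mul, mul_comm ‖a₂‖] using
    norm_le_of_smul_eq_smul_mulVec_mulVec hM hx₁ heq

end MNorm

/-- every generalized eigenvalue `λ` of `A = [[H_T,M₁],[M₂,H_P]]`
with respect to the block lower-triangular preconditioner `Π_GS = [[H_T,0],[M₂,H_P]]`
satisfies `|λ-1| ≤ C_T C_P (γ-1)(1-Λ/𝓜)`, and `λ = 1` occurs with eigenspace of
dimension at least `n`. -/
theorem stmt7 {n : ℕ} (M HT HP : Matrix (Fin n) (Fin n) ℂ) (hM : M.PosDef)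
    (hHT : IsUnit HT) (hHP : IsUnit HP)
    (CT CP γ Λ 𝓜 : ℝ) (hγ : 1 < γ) (hΛ : 0 < Λ) (hΛ𝓜 : Λ < 𝓜)
    (hCT : opNormM M (HT⁻¹ * M) ≤ CT) (hCP : opNormM M (HP⁻¹ * M) ≤ CP) :
    (∀ lam : ℂ, (∃ x : (Fin n ⊕ Fin n) → ℂ, x ≠ 0 ∧
      (Matrix.fromBlocks HT ((Complex.I * (((γ : ℂ) - 1) / (γ : ℂ))) • M)
          (((γ * (1 - Λ / 𝓜) : ℝ) : ℂ) • M) HP).mulVec x =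
        lam • (Matrix.fromBlocks HT 0 (((γ * (1 - Λ / 𝓜) : ℝ) : ℂ) • M) HP).mulVec x) →
      ‖lam - 1‖ ≤ CT * CP * (γ - 1) * (1 - Λ / 𝓜)) ∧
    (∃ S : Submodule ℂ ((Fin n ⊕ Fin n) → ℂ), n ≤ Module.finrank ℂ S ∧
      ∀ x ∈ S,
        (Matrix.fromBlocks HT ((Complex.I * (((γ : ℂ) - 1) / (γ : ℂ))) • M)
            (((γ * (1 - Λ / 𝓜) : ℝ) : ℂ) • M) HP).mulVec x =
          (1 : ℂ) • (Matrix.fromBlocks HT 0 (((γ * (1 - Λ / 𝓜) : ℝ) : ℂ) • M) HP).mulVec x) := by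
  have hγ₁ : 0 < γ - 1 := sub_pos.mpr hγ
  have hρ : 0 < 1 - Λ / 𝓜 := sub_pos.mpr ((div_lt_one (hΛ.trans hΛ𝓜)).mpr hΛ𝓜)
  have hcoef : ‖Complex.I * (((γ : ℂ) - 1) / γ)‖ * ‖((γ * (1 - Λ / 𝓜) : ℝ) : ℂ)‖ =
      (γ - 1) * (1 - Λ / 𝓜) := by
    rw [show ((γ : ℂ) - 1) / γ = ((((γ - 1) / γ : ℝ)) : ℂ) by push_cast; rfl, norm_mul,
      Complex.norm_I, one_mul, Complex.norm_real, Complex.norm_real,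
      Real.norm_of_nonneg (by bound), Real.norm_of_nonneg (by bound)]
    field_simp
  refine ⟨fun lam ⟨x, hx, h⟩ => ?_, ?_⟩
  · calc ‖lam - 1‖ ≤ (γ - 1) * (1 - Λ / 𝓜) * (opNormM M (HT⁻¹ * M) * opNormM M (HP⁻¹ * M)) :=
          hcoef ▸ norm_sub_one_le_of_mulVec_eq_smul hM hHT hHP hx h
      _ ≤ (γ - 1) * (1 - Λ / 𝓜) * (CT * CP) :=
          mul_le_mul_of_nonneg_left
            (mul_le_mul hCT hCP (opNormM_nonneg _) ((opNormM_nonneg _).trans hCT))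
            (mul_pos hγ₁ hρ).le
      _ = CT * CP * (γ - 1) * (1 - Λ / 𝓜) := by ring
  · exact ⟨_, (Matrix.finrank_ker_funLeft_inr).ge.trans' (by simp),
      fun x hx => by rw [one_smul]; exact Matrix.fromBlocks_mulVec_eq_of_comp_inr_eq_zero hx⟩
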